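/- Let N ≥ 3 and let 0 ≤ k ≤ n be integers. Define W_{n,k} : (0,∞) → ℝ by W_{n,k}(r) = r^k (1+r²)^{−(k+(N−2)/2)} · P_{n−k}^{(k+(N−2)/2, k+(N−2)/2)}( (1−r²)/(1+r²) ). Then for every r > 0, r^{−(N−2)} · W_{n,k}(1/r) = (−1)^{n−k} · W_{n,k}(r); in particular W_{n,k} is invariant under the Kelvin transform when n−k is even and anti-invariant when n−k is odd. -/

import Mathlib

open scoped BigOperators

/-- Generalized binomial coefficient `C(a, k) = a(a-1)⋯(a-k+1)/k!`. -/
noncomputable def genBinom (a : ℝ) (k : ℕ) : ℝ :=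
  (∏ i ∈ Finset.range k, (a - i)) / (Nat.factorial k)

/-- The Jacobi polynomial `P_m^{(b,c)}`. -/
noncomputable def jacobiP (m : ℕ) (b c : ℝ) (x : ℝ) : ℝ :=
  ∑ s ∈ Finset.range (m + 1),
    genBinom ((m : ℝ) + b) s * genBinom ((m : ℝ) + c) (m - s) *
      ((x - 1) / 2) ^ (m - s) * ((x + 1) / 2) ^ s

/-- The radial profile `W_{n,k}(r) = r^k (1+r²)^{-(k+(N-2)/2)}
  P_{n-k}^{(k+(N-2)/2, k+(N-2)/2)}((1-r²)/(1+r²))`. -/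
noncomputable def Wnk (N n k : ℕ) (r : ℝ) : ℝ :=
  r ^ k * (1 + r ^ 2) ^ (-((k : ℝ) + ((N : ℝ) - 2) / 2)) *
    jacobiP (n - k) ((k : ℝ) + ((N : ℝ) - 2) / 2) ((k : ℝ) + ((N : ℝ) - 2) / 2)
      ((1 - r ^ 2) / (1 + r ^ 2))

/-! Under `r ↦ 1/r` the Jacobi argument `(1 - r²)/(1 + r²)` changes sign, and the symmetric
Jacobi polynomial `P_m^{(b,b)}` has parity `(-1)^m`. The remaining power factors match because
`1 + r⁻² = r⁻² (1 + r²)`, so the Kelvin weight `r^{-(N-2)}` exactly compensates the exponents. -/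

open Real

lemma jacobiP_neg (m : ℕ) (b x : ℝ) :
    jacobiP m b b (-x) = (-1 : ℝ) ^ m * jacobiP m b b x := by
  unfold jacobiP
  rw [Finset.mul_sum, ← Finset.sum_range_reflect _ (m + 1)]
  refine Finset.sum_congr rfl fun s hs => ?_
  have hsm : s ≤ m := Nat.lt_succ_iff.mp (Finset.mem_range.mp hs)
  have hsign : (-1 : ℝ) ^ (m - s) * (-1 : ℝ) ^ s = (-1 : ℝ) ^ m := by
    rw [← pow_add, Nat.sub_add_cancel hsm]
  simp only [Nat.add_sub_cancel, Nat.sub_sub_self hsm]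
  rw [show (-x - 1) / 2 = -((x + 1) / 2) by ring, show (-x + 1) / 2 = -((x - 1) / 2) by ring,
    neg_pow ((x + 1) / 2), neg_pow ((x - 1) / 2)]
  linear_combination (genBinom ((m : ℝ) + b) s * genBinom ((m : ℝ) + b) (m - s) *
    ((x + 1) / 2) ^ s * ((x - 1) / 2) ^ (m - s)) * hsign

lemma one_sub_inv_sq_div_one_add_inv_sq {r : ℝ} (hr : r ≠ 0) :
    (1 - (1 / r) ^ 2) / (1 + (1 / r) ^ 2) = -((1 - r ^ 2) / (1 + r ^ 2)) := by
  have : 0 < 1 + r ^ 2 := by positivity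
  field_simp
  ring

lemma one_add_inv_sq_rpow_neg {r : ℝ} (hr : 0 < r) (a : ℝ) :
    (1 + (1 / r) ^ 2) ^ (-a) = r ^ (2 * a) * (1 + r ^ 2) ^ (-a) := by
  have hsq : 1 + (1 / r) ^ 2 = (1 + r ^ 2) * (r ^ 2)⁻¹ := by field_simp; ring
  have hsq_rpow : (r ^ 2) ^ a = r ^ (2 * a) := by
    rw [← rpow_natCast, ← rpow_mul hr.le, Nat.cast_ofNat]
  rw [hsq, mul_rpow (by positivity) (by positivity), inv_rpow (sq_nonneg r),
    rpow_neg (sq_nonneg r), inv_inv, hsq_rpow, mul_comm]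

theorem statement7_general (N n k : ℕ) :
    ∀ r : ℝ, 0 < r →
      r ^ (-((N : ℝ) - 2)) * Wnk N n k (1 / r) = (-1 : ℝ) ^ (n - k) * Wnk N n k r := by
  intro r hr
  set a : ℝ := (k : ℝ) + ((N : ℝ) - 2) / 2
  have hweight : r ^ (-((N : ℝ) - 2)) * (1 / r) ^ k * r ^ (2 * a) = r ^ k := by
    rw [one_div, inv_pow, ← rpow_natCast, ← rpow_neg hr.le, ← rpow_add hr, ← rpow_add hr]
    congr 1
    ring
  unfold Wnk
  rw [one_sub_inv_sq_div_one_add_inv_sq hr.ne', jacobiP_neg, one_add_inv_sq_rpow_neg hr,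
    ← hweight]
  ring

theorem statement7 (N n k : ℕ) (hN : 3 ≤ N) (hk : k ≤ n) :
    ∀ r : ℝ, 0 < r →
      r ^ (-((N : ℝ) - 2)) * Wnk N n k (1 / r) = (-1 : ℝ) ^ (n - k) * Wnk N n k r :=
  statement7_general N n k
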